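/- For every n ≥ 1, the function h_n(ν) has exactly n−1 real zeros, all of which are negative and simple; moreover the zeros of h_n and h_{n+1} strictly interlace. -/

import Mathlib

open Finset

/-- The functions `h_n(ν)` defined by `h_0 = h_1 = 1` and
`h_{n+1}(ν) = (2(ν+n)/ν) h_n(ν) - h_{n-1}(ν)` for `n ≥ 1`. -/
noncomputable def hfun : ℕ → ℝ → ℝ
  | 0, _ => 1
  | 1, _ => 1
  | n + 2, ν => (2 * (ν + (n + 1)) / ν) * hfun (n + 1) ν - hfun n ν

/-- The set of (real, nonzero) zeros of `h_n`. -/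
def hZeros (n : ℕ) : Set ℝ := {ν : ℝ | ν ≠ 0 ∧ hfun n ν = 0}

/-!
Clearing denominators, `H_{k+1}(ν) = ν ^ k h_{k+1}(ν)` is a monic polynomial of degree `k`, positive
at `0`, satisfying `H_{k+2} = 2 (ν + k + 2) H_{k+1} - ν ^ 2 H_k`. At a zero `s` of `H_{k+1}` this
reads `H_{k+2}(s) = -s ^ 2 H_k(s)`, so if the zeros of `H_k` and `H_{k+1}` interlace, `H_{k+2}`
alternates in sign along `-∞ < s_0 < ⋯ < s_k < 0`. The intermediate value theorem then gives
`k + 2` negative zeros of `H_{k+2}` interlacing those of `H_{k+1}`; by degree these are all of its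
zeros, and they are simple.
-/

open Polynomial Filter

open Asymptotics in
lemma Polynomial.Monic.exists_lt_neg_one_pow_mul_eval_pos {p : ℝ[X]} (hp : p.Monic) (a : ℝ) :
    ∃ y < a, 0 < (-1) ^ p.natDegree * p.eval y := by
  have hequiv : (fun x ↦ (-1) ^ p.natDegree * p.eval x) ~[atBot]
      fun x ↦ (-1) ^ p.natDegree * (p.leadingCoeff * x ^ p.natDegree) :=
    IsEquivalent.refl.mul p.isEquivalent_atBot_lead
  have hpos : ∀ᶠ x in atBot, 0 < (-1) ^ p.natDegree * p.eval x := by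
    refine hequiv.eventually_pos ?_
    filter_upwards [eventually_lt_atBot 0] with x hx
    rw [hp.leadingCoeff, one_mul, ← mul_pow]
    exact pow_pos (by linarith) _
  obtain ⟨y, hy, hya⟩ := (hpos.and (eventually_lt_atBot a)).exists
  exact ⟨y, hya, hy⟩

lemma exists_zeros_of_alternating_signs {m c : ℕ} {f : ℝ → ℝ} (hf : Continuous f)
    {e : Fin (m + 1) → ℝ} (he : StrictMono e)
    (hsign : ∀ j : Fin (m + 1), 0 < (-1) ^ (c + (j : ℕ)) * f (e j)) :
    ∃ t : Fin m → ℝ, (∀ i, t i ∈ Set.Ioo (e i.castSucc) (e i.succ)) ∧ ∀ i, f (t i) = 0 := by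
  suffices ∀ i : Fin m, ∃ x ∈ Set.Ioo (e i.castSucc) (e i.succ), f x = 0 by
    choose t ht using this
    exact ⟨t, fun i ↦ (ht i).1, fun i ↦ (ht i).2⟩
  intro i
  have hlt := he i.castSucc_lt_succ
  have h₀ := hsign i.castSucc
  have h₁ := hsign i.succ
  simp only [Fin.val_castSucc, Fin.val_succ, pow_succ, ← add_assoc] at h₀ h₁
  rcases neg_one_pow_eq_or ℝ (c + i) with h | h <;> rw [h] at h₀ h₁
  · exact intermediate_value_Ioo' hlt.le hf.continuousOn ⟨by linarith, by linarith⟩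
  · exact intermediate_value_Ioo hlt.le hf.continuousOn ⟨by linarith, by linarith⟩

lemma neg_one_pow_mul_prod_sub_pos {k : ℕ} (r : Fin k → ℝ) {x : ℝ} {m : ℕ}
    (hlt : ∀ j : Fin k, (j : ℕ) < m → r j < x) (hgt : ∀ j : Fin k, m ≤ j → x < r j) :
    0 < (-1) ^ (k - m) * ∏ j, (x - r j) := by
  induction k with
  | zero => simp
  | succ k ih =>
    rw [Fin.prod_univ_castSucc]
    have ih' := ih (fun j ↦ r j.castSucc) (fun j hj ↦ hlt _ hj) (fun j hj ↦ hgt _ hj)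
    rcases le_or_gt m k with hm | hm
    · have hlast : x - r (Fin.last k) < 0 := sub_neg.2 (hgt _ hm)
      rw [show k + 1 - m = k - m + 1 by omega, pow_succ]
      nlinarith
    · have hlast : 0 < x - r (Fin.last k) := sub_pos.2 (hlt _ hm)
      rw [show k + 1 - m = 0 by omega, show k - m = 0 by omega] at *
      simp only [pow_zero, one_mul] at ih' ⊢
      positivity

lemma eval_prod_X_sub_C_eq_zero {m : ℕ} (t : Fin m → ℝ) (i : Fin m) :
    (∏ j, (X - C (t j))).eval (t i) = 0 := by
  rw [eval_prod]
  exact Finset.prod_eq_zero (Finset.mem_univ i) (by simp)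

lemma eq_prod_X_sub_C_of_eval_eq_zero {m : ℕ} {p : ℝ[X]} (hp : p.Monic) (hdeg : p.natDegree = m)
    {t : Fin m → ℝ} (ht : Function.Injective t) (hroot : ∀ i, p.eval (t i) = 0) :
    p = ∏ i, (X - C (t i)) := by
  have hprod : (∏ i, (X - C (t i))).Monic := monic_prod_of_monic _ _ fun i _ ↦ monic_X_sub_C _
  refine eq_of_degree_sub_lt_of_eval_index_eq (s := Finset.univ) (v := t) ht.injOn ?_ ?_
  · have hq : (∏ i, (X - C (t i))).natDegree = m := by
      rw [natDegree_prod_of_monic _ _ fun i _ ↦ monic_X_sub_C _]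
      simp
    calc (p - ∏ i, (X - C (t i))).degree < p.degree :=
          degree_sub_lt_left (by rw [degree_eq_natDegree hp.ne_zero,
            degree_eq_natDegree hprod.ne_zero, hdeg, hq]) hp.ne_zero
            (by rw [hp.leadingCoeff, hprod.leadingCoeff])
      _ = (Finset.univ : Finset (Fin m)).card := by simp [degree_eq_natDegree hp.ne_zero, hdeg]
  · intro i _
    rw [hroot, eval_prod_X_sub_C_eq_zero]

def Separates (B A : Set ℝ) : Prop :=
  ∀ x ∈ A, ∀ y ∈ A, x < y → ∃ c ∈ B, x < c ∧ c < y

lemma existsUnique_mem_Ioo_of_separates {A B : Set ℝ} (hBA : Separates B A) (hAB : Separates A B)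
    {a b : ℝ} (ha : a ∈ A) (hb : b ∈ A) (hab : a < b) (hnc : ¬∃ c ∈ A, a < c ∧ c < b) :
    ∃! z, z ∈ B ∧ a < z ∧ z < b := by
  obtain ⟨z, hz, haz, hzb⟩ := hBA a ha b hb hab
  refine ⟨z, ⟨hz, haz, hzb⟩, fun w ⟨hw, haw, hwb⟩ ↦ ?_⟩
  by_contra hwz
  rcases lt_or_gt_of_ne hwz with h | h
  · obtain ⟨c, hc, hwc, hcz⟩ := hAB w hw z hz h
    exact hnc ⟨c, hc, haw.trans hwc, hcz.trans hzb⟩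
  · obtain ⟨c, hc, hzc, hcw⟩ := hAB z hz w hw h
    exact hnc ⟨c, hc, haz.trans hzc, hcw.trans hwb⟩

def Interlaces {k : ℕ} (r : Fin k → ℝ) (s : Fin (k + 1) → ℝ) : Prop :=
  ∀ i, s i.castSucc < r i ∧ r i < s i.succ

namespace Interlaces

variable {k : ℕ} {r : Fin k → ℝ} {s : Fin (k + 1) → ℝ}

lemma strictMono_right (h : Interlaces r s) : StrictMono s :=
  Fin.strictMono_iff_lt_succ.2 fun i ↦ (h i).1.trans (h i).2

lemma strictMono_left (h : Interlaces r s) : StrictMono r := fun i i' hii' ↦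
  calc r i < s i.succ := (h i).2
    _ ≤ s i'.castSucc := h.strictMono_right.monotone (Fin.succ_le_castSucc_iff.2 hii')
    _ < r i' := (h i').1

lemma separates_range_left (h : Interlaces r s) : Separates (Set.range s) (Set.range r) := by
  rintro _ ⟨i, rfl⟩ _ ⟨i', rfl⟩ hii'
  refine ⟨s i.succ, ⟨_, rfl⟩, (h i).2, ?_⟩
  exact (h.strictMono_right.monotone (Fin.succ_le_castSucc_iff.2
    (h.strictMono_left.lt_iff_lt.1 hii'))).trans_lt (h i').1

lemma separates_range_right (h : Interlaces r s) : Separates (Set.range r) (Set.range s) := by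
  rintro _ ⟨j, rfl⟩ _ ⟨j', rfl⟩ hjj'
  replace hjj' := h.strictMono_right.lt_iff_lt.1 hjj'
  obtain ⟨i, rfl⟩ := Fin.eq_castSucc_of_ne_last (hjj'.trans_le (Fin.le_last j')).ne
  exact ⟨r i, ⟨i, rfl⟩, (h i).1,
    (h i).2.trans_le (h.strictMono_right.monotone (Fin.castSucc_lt_iff_succ_le.1 hjj'))⟩

lemma neg_one_pow_mul_eval_pos (h : Interlaces r s) (i : Fin (k + 1)) :
    0 < (-1) ^ (k + (i : ℕ)) * (∏ j, (X - C (r j))).eval (s i) := by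
  have hpos := neg_one_pow_mul_prod_sub_pos r (x := s i) (m := i)
    (fun j hj ↦ (h j).2.trans_le (h.strictMono_right.monotone (by simp [Fin.le_def]; omega)))
    (fun j hj ↦ (h.strictMono_right.monotone (by simpa [Fin.le_def] using hj)).trans_lt (h j).1)
  rw [eval_prod]
  simp only [eval_sub, eval_X, eval_C]
  rwa [show k + (i : ℕ) = k - i + 2 * i by omega, pow_add, pow_mul, neg_one_sq, one_pow, mul_one]

end Interlaces

lemma hfun_add_two (n : ℕ) (ν : ℝ) :
    hfun (n + 2) ν = 2 * (ν + (n + 1)) / ν * hfun (n + 1) ν - hfun n ν := rfl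

/-- `hPoly k` is the paper's `H_{k+1}`. -/
noncomputable def hPoly : ℕ → ℝ[X]
  | 0 => 1
  | 1 => X + C 2
  | k + 2 => C 2 * (X + C ((k : ℝ) + 2)) * hPoly (k + 1) - X ^ 2 * hPoly k

lemma hPoly_eval_add_two (k : ℕ) (x : ℝ) :
    (hPoly (k + 2)).eval x =
      2 * (x + (k + 2)) * (hPoly (k + 1)).eval x - x ^ 2 * (hPoly k).eval x := by
  simp [hPoly]

lemma hPoly_eval (k : ℕ) {ν : ℝ} (hν : ν ≠ 0) : (hPoly k).eval ν = ν ^ k * hfun (k + 1) ν := by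
  induction k using Nat.twoStepInduction with
  | zero => simp [hPoly, hfun]
  | one => simp [hPoly, hfun]; field_simp; ring
  | more k ih₀ ih₁ =>
    rw [hPoly_eval_add_two, ih₀, ih₁, hfun_add_two (k + 1)]
    push_cast
    field_simp
    ring

lemma hPoly_eval_zero_pos (k : ℕ) : 0 < (hPoly k).eval 0 := by
  induction k using Nat.twoStepInduction with
  | zero => simp [hPoly]
  | one => simp [hPoly]
  | more k _ ih => rw [hPoly_eval_add_two]; simp; positivity

lemma hPoly_natDegree_le_and_coeff (k : ℕ) :
    (hPoly k).natDegree ≤ k ∧ (hPoly k).coeff k = 1 := by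
  induction k using Nat.twoStepInduction with
  | zero => simp [hPoly]
  | one => simp [hPoly]
  | more k ih₀ ih₁ =>
    obtain ⟨hd₀, hc₀⟩ := ih₀
    obtain ⟨hd₁, hc₁⟩ := ih₁
    have hc : (hPoly (k + 1)).coeff (k + 2) = 0 := coeff_eq_zero_of_natDegree_lt (by omega)
    refine ⟨?_, ?_⟩
    · rw [hPoly]
      compute_degree
      all_goals omega
    · simp only [hPoly, coeff_sub, mul_assoc, add_mul, coeff_C_mul, coeff_add, coeff_X_mul,
        coeff_X_pow_mul', hc, hc₁]
      norm_num [hc₀]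

lemma hPoly_monic (k : ℕ) : (hPoly k).Monic :=
  monic_of_natDegree_le_of_coeff_eq_one k (hPoly_natDegree_le_and_coeff k).1
    (hPoly_natDegree_le_and_coeff k).2

lemma hPoly_natDegree (k : ℕ) : (hPoly k).natDegree = k :=
  natDegree_eq_of_le_of_coeff_ne_zero (hPoly_natDegree_le_and_coeff k).1
    (by simp [(hPoly_natDegree_le_and_coeff k).2])

lemma hPoly_eval_add_two_of_isRoot {k : ℕ} {x : ℝ} (hx : (hPoly (k + 1)).eval x = 0) :
    (hPoly (k + 2)).eval x = -x ^ 2 * (hPoly k).eval x := by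
  rw [hPoly_eval_add_two, hx]; ring

lemma hPoly_step {k : ℕ} {r : Fin k → ℝ} {s : Fin (k + 1) → ℝ} (hrs : Interlaces r s)
    (hs : ∀ i, s i < 0) (hr : hPoly k = ∏ i, (X - C (r i)))
    (hs' : hPoly (k + 1) = ∏ i, (X - C (s i))) :
    ∃ t : Fin (k + 2) → ℝ,
      Interlaces s t ∧ (∀ i, t i < 0) ∧ hPoly (k + 2) = ∏ i, (X - C (t i)) := by
  obtain ⟨y, hy, hy_sign⟩ := (hPoly_monic (k + 2)).exists_lt_neg_one_pow_mul_eval_pos (s 0)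
  rw [hPoly_natDegree] at hy_sign
  -- The sign of `hPoly (k + 2)` alternates along `y < s 0 < ⋯ < s k < 0`.
  set e : Fin (k + 3) → ℝ := Fin.cons y (Fin.snoc s 0)
  have hs_mono := hrs.strictMono_right
  have he : StrictMono e := by
    have h_snoc : StrictMono (Fin.snoc s 0 : Fin (k + 2) → ℝ) := by
      rw [← Fin.insertNth_last', Fin.strictMono_insertNth_iff]
      exact ⟨hs_mono, fun i _ ↦ hs i, fun i hi ↦ absurd hi (Fin.castSucc_lt_last i).not_ge⟩
    refine Fin.strictMono_cons.2 ⟨fun j ↦ ?_, h_snoc⟩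
    induction j using Fin.lastCases with
    | last => simpa using hy.trans (hs 0)
    | cast i => simpa using hy.trans_le (hs_mono.monotone (Fin.zero_le i))
  have he_sign : ∀ j : Fin (k + 3), 0 < (-1) ^ (k + (j : ℕ)) * (hPoly (k + 2)).eval (e j) := by
    intro j
    induction j using Fin.cases with
    | zero => simpa [e, pow_add] using hy_sign
    | succ j =>
      induction j using Fin.lastCases with
      | last =>
        simpa [e, show k + (k + 2) = 2 * (k + 1) by ring, pow_mul]
          using hPoly_eval_zero_pos (k + 2)
      | cast i =>
        have h_root : (hPoly (k + 1)).eval (s i) = 0 := hs' ▸ eval_prod_X_sub_C_eq_zero s i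
        have h_sign := hr ▸ hrs.neg_one_pow_mul_eval_pos i
        have h_sq : 0 < s i ^ 2 := even_two.pow_pos (hs i).ne
        simp only [e, Fin.cons_succ, Fin.snoc_castSucc, Fin.val_succ, Fin.val_castSucc,
          hPoly_eval_add_two_of_isRoot h_root]
        rw [← add_assoc, pow_succ]
        nlinarith
  obtain ⟨t, ht, ht_root⟩ := exists_zeros_of_alternating_signs (hPoly (k + 2)).continuous he he_sign
  have hst : Interlaces s t := fun i ↦ by simpa [e] using And.intro (ht i.castSucc).2 (ht i.succ).1
  refine ⟨t, hst, fun i ↦ ?_, eq_prod_X_sub_C_of_eval_eq_zero (hPoly_monic _) (hPoly_natDegree _)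
    hst.strictMono_right.injective ht_root⟩
  calc t i < e i.succ := (ht i).2
    _ ≤ e (Fin.last _) := he.monotone (Fin.le_last _)
    _ = 0 := by simp [e]

lemma hPoly_interlacing (k : ℕ) : ∃ (r : Fin k → ℝ) (s : Fin (k + 1) → ℝ), Interlaces r s ∧
    (∀ i, s i < 0) ∧ hPoly k = ∏ i, (X - C (r i)) ∧ hPoly (k + 1) = ∏ i, (X - C (s i)) := by
  induction k with
  | zero =>
    exact ⟨Fin.elim0, fun _ ↦ -2, fun i ↦ i.elim0, by norm_num, by simp [hPoly], by simp [hPoly]⟩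
  | succ k ih =>
    obtain ⟨r, s, hrs, hs, hr, hs'⟩ := ih
    obtain ⟨t, hst, ht, ht'⟩ := hPoly_step hrs hs hr hs'
    exact ⟨s, t, hst, ht, hs', ht'⟩

lemma hZeros_succ_eq_range {k : ℕ} {r : Fin k → ℝ} (hr₀ : ∀ i, r i ≠ 0)
    (hr : hPoly k = ∏ i, (X - C (r i))) : hZeros (k + 1) = Set.range r := by
  ext ν
  constructor
  · rintro ⟨hν, hroot⟩
    have : (∏ i, (X - C (r i))).eval ν = 0 := by rw [← hr, hPoly_eval k hν, hroot, mul_zero]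
    rw [eval_prod, Finset.prod_eq_zero_iff] at this
    obtain ⟨i, -, hi⟩ := this
    exact ⟨i, by simpa [sub_eq_zero, eq_comm] using hi⟩
  · rintro ⟨i, rfl⟩
    refine ⟨hr₀ i, ?_⟩
    have := hPoly_eval k (hr₀ i)
    rw [hr, eval_prod_X_sub_C_eq_zero] at this
    exact (mul_eq_zero.1 this.symm).resolve_left (pow_ne_zero _ (hr₀ i))

lemma deriv_hfun_ne_zero {k : ℕ} {ν : ℝ} (hν : ν ≠ 0) (hroot : (hPoly k).eval ν = 0)
    (hsimple : (derivative (hPoly k)).eval ν ≠ 0) : deriv (hfun (k + 1)) ν ≠ 0 := by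
  have hlocal : hfun (k + 1) =ᶠ[nhds ν] fun x ↦ (hPoly k).eval x / x ^ k := by
    filter_upwards [isOpen_ne.mem_nhds hν] with x hx
    rw [hPoly_eval k hx, mul_div_cancel_left₀ _ (pow_ne_zero _ hx)]
  have hderiv : HasDerivAt (fun x ↦ (hPoly k).eval x / x ^ k) _ ν :=
    ((hPoly k).hasDerivAt ν).div (hasDerivAt_pow k ν) (pow_ne_zero k hν)
  rw [hlocal.deriv_eq, hderiv.deriv, hroot, zero_mul, sub_zero]
  exact div_ne_zero (mul_ne_zero hsimple (pow_ne_zero _ hν)) (by positivity)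

/-- For every `n ≥ 1`, `h_n` has exactly `n-1` real zeros, all negative and simple,
and the zeros of `h_n` and `h_{n+1}` strictly interlace. -/
theorem hfun_zeros (n : ℕ) (hn : 1 ≤ n) :
    hZeros n ⊆ Set.Iio 0 ∧
    (hZeros n).ncard = n - 1 ∧
    (∀ ν ∈ hZeros n, deriv (hfun n) ν ≠ 0) ∧
    (∀ a ∈ hZeros (n + 1), ∀ b ∈ hZeros (n + 1), a < b →
      (¬∃ c ∈ hZeros (n + 1), a < c ∧ c < b) →
      ∃! z, z ∈ hZeros n ∧ a < z ∧ z < b) ∧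
    (∀ a ∈ hZeros n, ∀ b ∈ hZeros n, a < b →
      (¬∃ c ∈ hZeros n, a < c ∧ c < b) →
      ∃! z, z ∈ hZeros (n + 1) ∧ a < z ∧ z < b) := by
  obtain ⟨k, rfl⟩ : ∃ k, n = k + 1 := ⟨n - 1, by omega⟩
  obtain ⟨r, s, hrs, hs, hr, hs'⟩ := hPoly_interlacing k
  have hr_neg : ∀ i, r i < 0 := fun i ↦ (hrs i).2.trans (hs _)
  have hr_inj := hrs.strictMono_left.injective
  rw [hZeros_succ_eq_range (fun i ↦ (hr_neg i).ne) hr,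
    hZeros_succ_eq_range (fun i ↦ (hs i).ne) hs']
  refine ⟨Set.range_subset_iff.2 hr_neg, ?_, ?_,
    fun a ha b hb ↦ existsUnique_mem_Ioo_of_separates hrs.separates_range_right
      hrs.separates_range_left ha hb,
    fun a ha b hb ↦ existsUnique_mem_Ioo_of_separates hrs.separates_range_left
      hrs.separates_range_right ha hb⟩
  · simp [Set.ncard_range_of_injective hr_inj]
  · rintro _ ⟨i, rfl⟩
    refine deriv_hfun_ne_zero (hr_neg i).ne (hr ▸ eval_prod_X_sub_C_eq_zero r i) ?_
    rw [hr]
    exact (separable_prod_X_sub_C_iff.2 hr_inj).eval₂_derivative_ne_zero (RingHom.id ℝ)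
      (eval_prod_X_sub_C_eq_zero r i)
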